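/- Let t be a Grothendieck topology on lSch/B finer than the Zariski topology. Then the inclusion functor lFan/B → lSch/B induces an equivalence of categories Shv_t(lFan/B) ≃ Shv_t(lSch/B) between the categories of t-sheaves. -/

import Mathlib

/-!
Abstract framework for "Inverting log blow-ups in log geometry" (divided log spaces).

Throughout, we fix a noetherian fs log scheme `B` of finite Krull dimension.  Since the
theory of fs log schemes is not available in Mathlib, we axiomatise the category
`lSch/B` of fs log schemes over `B` (with noetherian underlying schemes of finite Krull
dimension) as a structure `LogSchCat`, recording the full subcategory `lFan/B` and the
distinguished classes of morphisms used in the paper.  All sheaf-theoretic notions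
(the dividing Zariski topology, the sheaves `h_X`, representable `P`-morphisms,
divided log spaces, open complements and blow-ups) are then *defined*, exactly
following the paper, on top of this data.
-/

open CategoryTheory CategoryTheory.Limits Opposite

universe u

/-- The category `lSch/B` of noetherian fs log schemes of finite Krull dimension over a
noetherian fs log scheme `B` of finite Krull dimension, together with the full
subcategory `lFan/B` and the classes of morphisms considered in the paper.  Fiber
products of fs log schemes are taken in the category of fs log schemes. -/
structure LogSchCat : Type (u + 1) where
  /-- fs log schemes over `B` whose underlying scheme is noetherian of finite Krull
  dimension -/
  Obj : Type u
  /-- morphisms of fs log schemes over `B` -/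
  [cat : SmallCategory Obj]
  /-- the objects lying in the full subcategory `lFan/B` of finite disjoint unions of
  fs log schemes admitting fan charts -/
  inFan : Obj → Prop
  /-- quasi-compact morphisms -/
  quasiCompact : MorphismProperty Obj
  /-- dividing covers: quasi-compact universally surjective proper log étale
  monomorphisms -/
  dividingCover : MorphismProperty Obj
  /-- Zariski covers: quasi-compact surjective morphisms `∐ᵢ Yᵢ → X` (`I` finite) with
  each `Yᵢ → X` an open immersion -/
  zariskiCover : MorphismProperty Obj
  /-- dividing Zariski covers: quasi-compact universally surjective morphisms
  `∐ᵢ Yᵢ → X` (`I` finite) with each `Yᵢ → X` a log étale monomorphism -/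
  dividingZariskiCover : MorphismProperty Obj
  /-- dividing Nisnevich covers -/
  dividingNisnevichCover : MorphismProperty Obj
  /-- dividing étale covers -/
  dividingEtaleCover : MorphismProperty Obj
  /-- log étale covers -/
  logEtaleCover : MorphismProperty Obj
  /-- open immersions -/
  openImmersion : MorphismProperty Obj
  /-- strict immersions -/
  strictImmersion : MorphismProperty Obj
  /-- strict closed immersions -/
  strictClosedImmersion : MorphismProperty Obj
  /-- closed immersions of fs log schemes (the underlying morphism of schemes is a
  closed immersion and the morphism of log structures is surjective) -/
  closedImmersion : MorphismProperty Obj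
  /-- proper morphisms -/
  properMorphism : MorphismProperty Obj
  /-- strict morphisms (the log structure of the source is the pullback of the log
  structure of the target) -/
  strictMorphism : MorphismProperty Obj
  /-- exact morphisms (all induced homomorphisms of characteristic monoids are exact) -/
  exactMorphism : MorphismProperty Obj
  /-- log smooth morphisms -/
  logSmooth : MorphismProperty Obj
  /-- log étale morphisms -/
  logEtale : MorphismProperty Obj
  /-- the objects that are log smooth over `B` -/
  logSmoothOverB : Obj → Prop
  /-- strict closed immersions `Z → X` exhibiting `Z` as an effective log Cartier
  divisor on `X`, i.e. such that for every log smooth morphism `X' → X` the underlying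
  closed subscheme of `Z ×_X X'` is an effective Cartier divisor on the underlying
  scheme of `X'` -/
  effCartier : MorphismProperty Obj
  /-- `□`: the fs log scheme with underlying scheme `ℙ¹` and the compactifying log
  structure associated with the open immersion `𝔸¹ → ℙ¹` away from `∞` (base changed
  to `B`) -/
  box : Obj
  /-- `{0}`: the image of the zero section of `□` (with trivial log structure) -/
  boxZero : Obj
  /-- the zero section `{0} → □` -/
  zeroSection : boxZero ⟶ box
  /-- affine `n`-space over `B` with trivial log structure -/
  affineSpace : ℕ → Obj
  /-- the products `X × 𝔸ⁿ` (over `B`) exist in `lSch/B` -/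
  hasAffProd : ∀ (X : Obj) (n : ℕ), HasLimit (pair X (affineSpace n))
  /-- for a strict closed immersion `i : Z → X`, the blow-up
  `Bl_Z X := Bl_{Z̲}(X̲) ×_{X̲} X` of the fs log scheme `X` along `Z`, where
  `Bl_{Z̲}(X̲)` is the blow-up of the underlying scheme along the underlying closed
  subscheme -/
  logBlowUpSch : ∀ {Z X : Obj}, (Z ⟶ X) → Obj
  /-- the projection `Bl_Z X → X` -/
  logBlowUpSchProj : ∀ {Z X : Obj} (i : Z ⟶ X), logBlowUpSch i ⟶ X
  /-- every object of `lSch/B` admits a Zariski cover by an object of `lFan/B` -/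
  fanZariskiCoverExists : ∀ X : Obj, ∃ (Y : Obj) (f : Y ⟶ X), inFan Y ∧ zariskiCover f

attribute [instance] LogSchCat.cat

/-- The smallest Grothendieck topology in which, for every morphism `f` belonging to the
given class, the sieve generated by `f` is a covering sieve. -/
def genTop {C : Type u} [SmallCategory C] (P : MorphismProperty C) :
    GrothendieckTopology C :=
  sInf {J | ∀ ⦃X Y : C⦄ (f : Y ⟶ X), P f → Sieve.generate (Presieve.singleton f) ∈ J X}

namespace LogSchCat

variable (T : LogSchCat.{u})

/-- The full subcategory `lFan/B` of `lSch/B`. -/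
abbrev FanCat : Type u := ObjectProperty.FullSubcategory T.inFan

/-- Restriction of a class of morphisms of `lSch/B` to `lFan/B`. -/
def restrict (P : MorphismProperty T.Obj) : MorphismProperty T.FanCat :=
  fun _ _ f => P f.hom

/-- The dividing Zariski topology on `lFan/B`: the Grothendieck topology generated by
the dividing Zariski covers. -/
def dZarTop : GrothendieckTopology T.FanCat := genTop (T.restrict T.dividingZariskiCover)

/-- The dividing topology on `lFan/B`: generated by the dividing covers. -/
def divTop : GrothendieckTopology T.FanCat := genTop (T.restrict T.dividingCover)

/-- The Zariski topology on `lFan/B`: generated by the Zariski covers. -/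
def zarTop : GrothendieckTopology T.FanCat := genTop (T.restrict T.zariskiCover)

/-- The category of dividing Zariski sheaves of sets on `lFan/B`. -/
abbrev Shv : Type (u + 1) := Sheaf T.dZarTop (Type u)

/-- The presheaf on `lFan/B` represented by an object `X` of `lSch/B`. -/
def pre (X : T.Obj) : (T.FanCat)ᵒᵖ ⥤ Type u :=
  (ObjectProperty.ι T.inFan).op ⋙ yoneda.obj X

/-- `h_X`: the dividing Zariski sheaf on `lFan/B` associated with the presheaf
represented by `X ∈ lSch/B`. -/
noncomputable def h (X : T.Obj) : T.Shv :=
  (presheafToSheaf T.dZarTop (Type u)).obj (T.pre X)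

/-- The morphism `h_f : h_X → h_Y` induced by a morphism `f : X → Y` of `lSch/B`. -/
noncomputable def hmap {X Y : T.Obj} (f : X ⟶ Y) : T.h X ⟶ T.h Y :=
  (presheafToSheaf T.dZarTop (Type u)).map
    (Functor.whiskerLeft (ObjectProperty.ι T.inFan).op (yoneda.map f))

/-- A morphism `u : 𝒢 → ℱ` of dividing Zariski sheaves on `lFan/B` is a representable
`P`-morphism if for every morphism `h_X → ℱ` with `X ∈ lFan/B` there are isomorphisms
`h_U ≅ h_X` and `h_V ≅ h_X ×_ℱ 𝒢` identifying the projection `h_X ×_ℱ 𝒢 → h_X` with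
`h_g` for some morphism `g : V → U` of `lFan/B` belonging to `P`. -/
noncomputable def IsRep (P : MorphismProperty T.Obj) {G F : T.Shv} (u : G ⟶ F) : Prop :=
  ∀ (X : T.Obj), T.inFan X → ∀ x : T.h X ⟶ F,
    ∃ (U V : T.Obj) (_ : T.inFan U) (_ : T.inFan V) (g : V ⟶ U) (_ : P g)
      (eU : T.h U ≅ T.h X) (eV : T.h V ≅ pullback x u),
      T.hmap g ≫ eU.hom = eV.hom ≫ pullback.fst x u

/-- A divided log space over `B`: a dividing Zariski sheaf on `lFan/B` whose diagonal is
a representable strict immersion and which admits a representable Zariski cover `h_X → 𝒳`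
with `X ∈ lFan/B`.  Morphisms of divided log spaces are morphisms of sheaves; `lSpc/B`
is the full subcategory of divided log spaces. -/
structure IsDivided (F : T.Shv) : Prop where
  diagonal : T.IsRep T.strictImmersion (prod.lift (𝟙 F) (𝟙 F))
  cover : ∃ (X : T.Obj) (_ : T.inFan X) (p : T.h X ⟶ F), T.IsRep T.zariskiCover p

/-- A morphism of divided log spaces is a `P`-morphism (e.g. a closed immersion, an open
immersion, or a log smooth morphism) if its composition with some representable Zariski
cover of the source is a representable `P`-morphism. -/
noncomputable def SpcIs (P : MorphismProperty T.Obj) {Y X : T.Shv} (f : Y ⟶ X) : Prop :=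
  ∃ (U : T.Shv) (v : U ⟶ Y), T.IsRep T.zariskiCover v ∧ T.IsRep P (v ≫ f)

/-- Closed immersions of divided log spaces. -/
noncomputable abbrev SpcClosedImmersion {Y X : T.Shv} (f : Y ⟶ X) : Prop :=
  T.SpcIs T.strictClosedImmersion f

/-- Open immersions of divided log spaces. -/
noncomputable abbrev SpcOpenImmersion {Y X : T.Shv} (f : Y ⟶ X) : Prop :=
  T.SpcIs T.openImmersion f

/-- Log smooth morphisms of divided log spaces. -/
noncomputable abbrev SpcLogSmooth {Y X : T.Shv} (f : Y ⟶ X) : Prop :=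
  T.SpcIs T.logSmooth f

/-- `w : 𝒲 → 𝒳` is the open complement of a closed immersion `i : 𝒵 → 𝒳` of divided log
spaces: `𝒲` is a final object of the full subcategory of `lSpc/𝒳` consisting of the
morphisms `𝒴 → 𝒳` such that `𝒵 ×_𝒳 𝒴 = ∅`. -/
noncomputable def IsOpenComplement {Z X W : T.Shv} (i : Z ⟶ X) (w : W ⟶ X) : Prop :=
  T.IsDivided W ∧ Nonempty (IsInitial (pullback i w)) ∧
    ∀ (Y : T.Shv), T.IsDivided Y → ∀ g : Y ⟶ X,
      Nonempty (IsInitial (pullback i g)) → ∃! k : Y ⟶ W, k ≫ w = g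

/-- A closed immersion `i : 𝒵 → 𝒳` of divided log spaces is an effective log Cartier
divisor if there is a cartesian square whose top row is `h_{i₀} : h_{Z₀} → h_{X₀}` for a
morphism `i₀ : Z₀ → X₀` of `lFan/B` exhibiting `Z₀` as an effective log Cartier divisor
on `X₀`, and whose vertical morphisms `h_{Z₀} → 𝒵` and `h_{X₀} → 𝒳` are representable
Zariski covers. -/
noncomputable def IsEffDiv {Z X : T.Shv} (i : Z ⟶ X) : Prop :=
  ∃ (Z₀ X₀ : T.Obj) (_ : T.inFan Z₀) (_ : T.inFan X₀) (i₀ : Z₀ ⟶ X₀)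
    (_ : T.effCartier i₀) (pZ : T.h Z₀ ⟶ Z) (pX : T.h X₀ ⟶ X),
    T.IsRep T.zariskiCover pZ ∧ T.IsRep T.zariskiCover pX ∧
      IsPullback (T.hmap i₀) pZ pX i

/-- `p : ℬ → 𝒳` is the blow-up of `𝒳` along a closed immersion `i : 𝒵 → 𝒳` of divided
log spaces: `ℬ` is a final object of the full subcategory of `lSpc/𝒳` consisting of the
morphisms `𝒴 → 𝒳` such that `𝒵 ×_𝒳 𝒴` is an effective log Cartier divisor on `𝒴`. -/
noncomputable def IsBlowUp {Z X : T.Shv} (i : Z ⟶ X) {B : T.Shv} (p : B ⟶ X) : Prop :=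
  T.IsDivided B ∧ T.IsEffDiv (pullback.snd i p) ∧
    ∀ (Y : T.Shv), T.IsDivided Y → ∀ g : Y ⟶ X,
      T.IsEffDiv (pullback.snd i g) → ∃! k : Y ⟶ B, k ≫ p = g

end LogSchCat

open LogSchCat

lemma generate_singleton_mem_of_genTop_le {C : Type u} [SmallCategory C]
    {P : MorphismProperty C} {J : GrothendieckTopology C} (hJ : genTop P ≤ J)
    {X Y : C} {f : Y ⟶ X} (hf : P f) :
    Sieve.generate (Presieve.singleton f) ∈ J X :=
  hJ _ ((GrothendieckTopology.mem_sInf _ _).2 fun _ hK => hK f hf)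

lemma ObjectProperty.isCoverDense_ι_of_genTop_le {C : Type u} [SmallCategory C]
    {Q : ObjectProperty C} {P : MorphismProperty C} {J : GrothendieckTopology C}
    (hJ : genTop P ≤ J) (hQ : ∀ X : C, ∃ (Y : C) (f : Y ⟶ X), Q Y ∧ P f) :
    (ObjectProperty.ι Q).IsCoverDense J where
  is_cover X := by
    obtain ⟨Y, f, hY, hf⟩ := hQ X
    refine J.superset_covering ?_ (generate_singleton_mem_of_genTop_le hJ hf)
    rintro Z g ⟨W, l, _, hm, hfac⟩
    cases hm
    exact ⟨⟨⟨Y, hY⟩, l, f, hfac⟩⟩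

/-- STATEMENT 15: Let `t` be a Grothendieck topology on `lSch/B` finer than the
Zariski topology.  Then the inclusion functor `lFan/B → lSch/B` induces an equivalence
of categories `Shv_t(lFan/B) ≃ Shv_t(lSch/B)`: for the topology `K` on `lFan/B`
obtained by restricting `J` (the induced topology), there is an equivalence
`Shv_J(lSch/B) ⥤ Shv_K(lFan/B)` given by restriction along the inclusion. -/
theorem statement15 (T : LogSchCat.{u}) (J : GrothendieckTopology T.Obj)
    (hJ : genTop T.zariskiCover ≤ J)
    (K : GrothendieckTopology T.FanCat)
    (hK : ∀ (X : T.FanCat) (S : Sieve X),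
      S ∈ K X ↔ S.functorPushforward (ObjectProperty.ι T.inFan) ∈
        J ((ObjectProperty.ι T.inFan).obj X)) :
    ∃ E : Sheaf J (Type u) ⥤ Sheaf K (Type u),
      (∀ F : Sheaf J (Type u),
        (E.obj F).val = (ObjectProperty.ι T.inFan).op ⋙ F.val) ∧
      E.IsEquivalence := by
  have := ObjectProperty.isCoverDense_ι_of_genTop_le hJ T.fanZariskiCoverExists
  have : (ObjectProperty.ι T.inFan).IsDenseSubsite K J :=
    { functorPushforward_mem_iff := fun {X S} => (hK X S).symm }
  -- the comparison lemma for dense subsites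
  exact ⟨(ObjectProperty.ι T.inFan).sheafPushforwardContinuous (Type u) K J,
    fun _ => rfl, inferInstance⟩
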